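/- Let H be self-adjoint, Δ ⊆ ℝ a Borel set, and B a symmetric operator (or bounded quadratic form) such that the Mourre-type estimate E_Δ(H) B E_Δ(H) ≥ α E_Δ(H) holds with α > 0, where B is the closure of the commutator form [H, iA] for some symmetric A satisfying the virial theorem. Then H has no eigenvalue in Δ. -/

import Mathlib

open scoped ComplexInnerProductSpace

theorem eq_zero_of_mourre_of_inner_eq_zero {𝕜 E : Type*} [RCLike 𝕜] [NormedAddCommGroup E]
    [InnerProductSpace 𝕜 E] {B P : E → E} {α : ℝ} (hα : 0 < α)
    (hMourre : ∀ ψ, α * ‖P ψ‖ ^ 2 ≤ RCLike.re (inner 𝕜 (P ψ) (B (P ψ))))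
    {ψ : E} (hPψ : P ψ = ψ) (hBψ : inner 𝕜 ψ (B ψ) = 0) : ψ = 0 := by
  have hle : α * ‖ψ‖ ^ 2 ≤ 0 := by simpa [hPψ, hBψ] using hMourre ψ
  have hsq : ‖ψ‖ ^ 2 = 0 := le_antisymm (nonpos_of_mul_nonpos_right hle hα) (by positivity)
  simpa using hsq

/-- Mourre estimate excludes eigenvalues: if `P` is the spectral projection of `H` onto
the Borel set `Δ` (so that every eigenvector of `H` with eigenvalue in `Δ` is fixed by `P`),
`B` is the (closed) commutator form `[H, iA]` satisfying the Mourre estimate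
`P B P ≥ α P` with `α > 0`, and the virial theorem `⟪ψ, Bψ⟫ = 0` holds for all
eigenvectors `ψ` of `H` with eigenvalue in `Δ`, then `H` has no eigenvalue in `Δ`. -/
theorem mourre_no_eigenvalue {𝓗 : Type*} [NormedAddCommGroup 𝓗] [InnerProductSpace ℂ 𝓗]
    (H B P : 𝓗 →ₗ[ℂ] 𝓗) (Δ : Set ℝ) (α : ℝ) (hα : 0 < α)
    (hP : ∀ μ ∈ Δ, ∀ ψ : 𝓗, H ψ = (μ : ℂ) • ψ → P ψ = ψ)
    (hMourre : ∀ ψ : 𝓗, α * ‖P ψ‖ ^ 2 ≤ (⟪P ψ, B (P ψ)⟫).re)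
    (hVirial : ∀ μ ∈ Δ, ∀ ψ : 𝓗, H ψ = (μ : ℂ) • ψ → ⟪ψ, B ψ⟫ = 0) :
    ∀ μ ∈ Δ, ∀ ψ : 𝓗, ψ ≠ 0 → H ψ ≠ (μ : ℂ) • ψ := fun μ hμ ψ hψ hEigen =>
  hψ <| eq_zero_of_mourre_of_inner_eq_zero (𝕜 := ℂ) hα hMourre (hP μ hμ ψ hEigen)
    (hVirial μ hμ ψ hEigen)
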